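/- arXiv:0901.2531 — 3 statements merged into one kernel-verified Lean document; each statement's English description precedes it below -/
import Mathlib

section
/- If a sequence of partitions {π_n} of [0,1] is uniformly distributed, then it is dense, i.e. lim_{n→∞} diam π_n = 0. -/
open MeasureTheory Filter

/-- A partition of `[0,1]` into `k` closed intervals, determined by points
`0 = t 0 < t 1 < ⋯ < t k = 1`. -/
structure UnitIntervalPartition where
  k : ℕ
  k_pos : 0 < k
  t : ℕ → ℝ
  t_zero : t 0 = 0
  t_last : t k = 1
  mono : ∀ i < k, t i < t (i + 1)

namespace UnitIntervalPartition

/-- The length of the `i`-th interval (`0`-indexed). -/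
def length (π : UnitIntervalPartition) (i : ℕ) : ℝ := π.t (i + 1) - π.t i

/-- The diameter of a partition: the maximal length of its intervals. -/
noncomputable def diam (π : UnitIntervalPartition) : ℝ :=
  (Finset.range π.k).sup' (Finset.nonempty_range_iff.mpr π.k_pos.ne') π.length

end UnitIntervalPartition

/-- A sequence of partitions is uniformly distributed if for every continuous `f` on `[0,1]`,
`(1/k(n)) ∑_{i=1}^{k(n)} f(tᵢⁿ) → ∫₀¹ f`. -/
def IsUD (π : ℕ → UnitIntervalPartition) : Prop :=
  ∀ f : ℝ → ℝ, ContinuousOn f (Set.Icc 0 1) →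
    Tendsto (fun n => (∑ i ∈ Finset.range (π n).k, f ((π n).t (i + 1))) / ((π n).k : ℝ))
      atTop (nhds (∫ x in (0:ℝ)..1, f x))

/-- `π'` is a permutation of `π`: it has the same number of intervals, and its list of
interval lengths is a rearrangement of that of `π`. -/
def IsPermutationOf (π' π : UnitIntervalPartition) : Prop :=
  π'.k = π.k ∧ ∃ e : Equiv.Perm (Fin π.k), ∀ i : Fin π.k, π'.length i = π.length (e i)

/-!
A partition of diameter greater than `3/N` has an interval containing one of the grid intervals
`(j/N, (j+2)/N)`, `j + 2 ≤ N`. The tent over that grid interval vanishes at every partition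
point, so its Riemann average is `0`. Uniform distribution makes the averages of these finitely
many tents converge to their positive integrals, so eventually all of them are positive and the
diameter is at most `3/N`.
-/

open Set

noncomputable def tent (c r x : ℝ) : ℝ := max 0 (r - |x - c|)

lemma tent_nonneg (c r x : ℝ) : 0 ≤ tent c r x := le_max_left _ _

lemma continuous_tent (c r : ℝ) : Continuous (tent c r) := by
  unfold tent; fun_prop

lemma tent_eq_zero_of_notMem_Ioo {c r x : ℝ} (hx : x ∉ Ioo (c - r) (c + r)) :
    tent c r x = 0 := by
  refine max_eq_left ?_
  rw [mem_Ioo, not_and_or, not_lt, not_lt] at hx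
  rcases hx with hx | hx
  · linarith [neg_abs_le (x - c)]
  · linarith [le_abs_self (x - c)]

lemma tent_pos {c r x : ℝ} (hx : x ∈ Ioo (c - r) (c + r)) : 0 < tent c r x :=
  lt_max_of_lt_right (by rw [sub_pos, abs_sub_lt_iff]; constructor <;> linarith [hx.1, hx.2])

lemma integral_tent_pos {a b c r : ℝ} (hr : 0 < r) (ha : a ≤ c - r) (hb : c + r ≤ b) :
    0 < ∫ x in a..b, tent c r x :=
  calc 0 < ∫ x in (c - r)..(c + r), tent c r x :=
        intervalIntegral.intervalIntegral_pos_of_pos_on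
          ((continuous_tent c r).intervalIntegrable _ _) (fun _ hx => tent_pos hx) (by linarith)
    _ ≤ ∫ x in a..b, tent c r x :=
        intervalIntegral.integral_mono_interval ha (by linarith) hb
          (Eventually.of_forall (tent_nonneg c r)) ((continuous_tent c r).intervalIntegrable _ _)

lemma exists_nat_div_between {N : ℕ} {A B : ℝ} (hN : 0 < N) (hA : 0 ≤ A) (hB : B ≤ 1)
    (hAB : 3 / N < B - A) : ∃ j : ℕ, j < N - 1 ∧ A ≤ j / N ∧ (j + 2) / N ≤ B := by
  have hNR : (0 : ℝ) < N := Nat.cast_pos.mpr hN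
  rw [div_lt_iff₀ hNR] at hAB
  refine ⟨⌈A * N⌉₊, ?_, ?_, ?_⟩
  · have hlt : (⌈A * N⌉₊ : ℝ) + 2 < N := by
      nlinarith [Nat.ceil_lt_add_one (mul_nonneg hA hNR.le)]
    have : ⌈A * N⌉₊ + 2 < N := by exact_mod_cast hlt
    omega
  · rw [le_div_iff₀ hNR]; exact Nat.le_ceil _
  · rw [div_le_iff₀ hNR]
    nlinarith [Nat.ceil_lt_add_one (mul_nonneg hA hNR.le)]

namespace UnitIntervalPartition

variable (π : UnitIntervalPartition)

lemma strictMonoOn_t : StrictMonoOn π.t (Iic π.k) :=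
  strictMonoOn_Iic_of_lt_succ π.mono

lemma t_mem_Icc {i : ℕ} (hi : i ≤ π.k) : π.t i ∈ Icc 0 1 := by
  rw [← π.t_zero, ← π.t_last]
  exact ⟨π.strictMonoOn_t.monotoneOn (Nat.zero_le _) hi (Nat.zero_le _),
    π.strictMonoOn_t.monotoneOn hi self_mem_Iic hi⟩

lemma t_notMem_Ioo {i m : ℕ} (hi : i < π.k) (hm : m ≤ π.k) :
    π.t m ∉ Ioo (π.t i) (π.t (i + 1)) := by
  rintro ⟨him, hmi⟩
  rw [← not_le, π.strictMonoOn_t.le_iff_le hm hi.le] at him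
  rw [← not_le, π.strictMonoOn_t.le_iff_le hi hm] at hmi
  omega

lemma length_pos {i : ℕ} (hi : i < π.k) : 0 < π.length i :=
  sub_pos.mpr (π.mono i hi)

lemma diam_pos : 0 < π.diam :=
  (π.length_pos π.k_pos).trans_le (Finset.le_sup' π.length (Finset.mem_range.mpr π.k_pos))

lemma exists_length_eq_diam : ∃ i < π.k, π.length i = π.diam := by
  obtain ⟨i, hi, h⟩ := Finset.exists_mem_eq_sup' (Finset.nonempty_range_iff.mpr π.k_pos.ne')
    π.length
  exact ⟨i, Finset.mem_range.mp hi, h.symm⟩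

lemma exists_tent_sum_eq_zero {N : ℕ} (hN : 0 < N) (hdiam : 3 / N < π.diam) :
    ∃ j < N - 1, ∑ i ∈ Finset.range π.k, tent ((j + 1) / N) (1 / N) (π.t (i + 1)) = 0 := by
  obtain ⟨i, hi, hlen⟩ := π.exists_length_eq_diam
  obtain ⟨j, hj, hleft, hright⟩ := exists_nat_div_between hN (π.t_mem_Icc hi.le).1
    (π.t_mem_Icc hi).2 (hdiam.trans_eq hlen.symm)
  refine ⟨j, hj, Finset.sum_eq_zero fun m hm => tent_eq_zero_of_notMem_Ioo fun hmem => ?_⟩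
  refine π.t_notMem_Ioo hi (Finset.mem_range.mp hm) (Ioo_subset_Ioo ?_ ?_ hmem)
  · calc π.t i ≤ j / N := hleft
      _ = (j + 1) / N - 1 / N := by ring
  · calc ((j : ℝ) + 1) / N + 1 / N = (j + 2) / N := by ring
      _ ≤ π.t (i + 1) := hright

end UnitIntervalPartition

lemma IsUD.eventually_tent_average_pos {π : ℕ → UnitIntervalPartition} (h : IsUD π)
    {N j : ℕ} (hj : j < N - 1) : ∀ᶠ n in atTop, 0 <
      (∑ i ∈ Finset.range (π n).k, tent ((j + 1) / N) (1 / N) ((π n).t (i + 1))) / (π n).k := by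
  have hjN : (j : ℝ) + 2 ≤ N := by exact_mod_cast (by omega : j + 2 ≤ N)
  have hNpos : (0 : ℝ) < N := by linarith [j.cast_nonneg (α := ℝ)]
  refine (h _ (continuous_tent _ _).continuousOn).eventually_const_lt
    (integral_tent_pos (by positivity) ?_ ?_)
  · rw [← sub_div, add_sub_cancel_right]; positivity
  · rw [← add_div, div_le_one hNpos]; linarith

/-- **Proposition 2.1.** Any uniformly distributed sequence of partitions is dense. -/
theorem ud_implies_dense (π : ℕ → UnitIntervalPartition) (h : IsUD π) :
    Tendsto (fun n => (π n).diam) atTop (nhds 0) := by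
  refine tendsto_order.2 ⟨fun a ha => Eventually.of_forall fun n => ha.trans (π n).diam_pos,
    fun ε hε => ?_⟩
  obtain ⟨N, hN⟩ := exists_nat_gt (3 / ε)
  have hNpos : (0 : ℝ) < N := lt_trans (by positivity) hN
  have hgrid : 3 / (N : ℝ) < ε := by
    rw [div_lt_iff₀ hε] at hN
    rwa [div_lt_iff₀ hNpos, mul_comm]
  have hpos := (Finset.range (N - 1)).eventually_all.2 fun j hj =>
    h.eventually_tent_average_pos (Finset.mem_range.mp hj)
  filter_upwards [hpos] with n hn
  by_contra! hle
  obtain ⟨j, hj, hzero⟩ := (π n).exists_tent_sum_eq_zero (Nat.cast_pos.mp hNpos)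
    (hgrid.trans_le hle)
  exact (hn j (Finset.mem_range.mpr hj)).ne' (by rw [hzero, zero_div])
end

section
/- (von Neumann) If {x_n} is a dense sequence of points in [0,1], then there exists a rearrangement {x_{n_k}} of these points (a reindexing by a bijection of ℕ) which is uniformly distributed. -/
/-!
The sequence `w = shellSeq` runs through the points `j / (2s + 1)`, `j ≤ 2s`, on the shell of
indices `[s², (s + 1)²)`; it is uniformly distributed because its shell sums are Riemann sums.
Since every open subinterval of `[0, 1]` contains infinitely many `x n`, a greedy enumeration can
take at step `k` an unused index `n` with `|x n - w k| < 1 / (k + 1)`, except at the square steps,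
where it takes the least unused index so that every index is eventually used. The rearranged
sequence is then close to `w` off the squares, a set of density zero, so it has the same Cesàro
means as `w` for every continuous `f`.
-/

open Filter Finset Asymptotics Topology

def IsUniformlyDistributed (y : ℕ → ℝ) : Prop :=
  ∀ f : ℝ → ℝ, ContinuousOn f (Set.Icc 0 1) →
    Tendsto (fun n => (∑ i ∈ range n, f (y i)) / (n : ℝ)) atTop (𝓝 (∫ t in (0:ℝ)..1, f t))

theorem tendsto_sum_div_iff_isLittleO {u : ℕ → ℝ} {L : ℝ} :
    Tendsto (fun n => (∑ i ∈ range n, u i) / (n : ℝ)) atTop (𝓝 L) ↔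
      (fun n => ∑ i ∈ range n, (u i - L)) =o[atTop] fun n => (n : ℝ) := by
  rw [isLittleO_iff_tendsto' (.of_forall fun n hn => by simp [Nat.cast_eq_zero.1 hn]),
    ← tendsto_sub_nhds_zero_iff]
  refine tendsto_congr' ((eventually_ne_atTop 0).mono fun n hn => ?_)
  simp only [sum_sub_distrib, sum_const, card_range, nsmul_eq_mul]
  field_simp

theorem isLittleO_sum_range_of_tendsto_of_count {d : ℕ → ℝ} {C : ℝ} (hd : ∀ i, |d i| ≤ C)
    {p : ℕ → Prop} [DecidablePred p]
    (hp : (fun n => (Nat.count p n : ℝ)) =o[atTop] fun n => (n : ℝ))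
    (hlim : Tendsto d (atTop ⊓ 𝓟 {i | ¬ p i}) (𝓝 0)) :
    (fun n => ∑ i ∈ range n, d i) =o[atTop] fun n => (n : ℝ) := by
  have hexc : (fun n => ∑ i ∈ range n, if p i then d i else 0) =O[atTop]
      fun n => (Nat.count p n : ℝ) := by
    refine .of_bound C (.of_forall fun n => ?_)
    rw [← sum_filter, Nat.count_eq_card_filter_range, Real.norm_natCast, mul_comm]
    simpa using norm_sum_le_of_le (f := d) _ fun i _ => hd i
  refine ((hexc.trans_isLittleO hp).add
    (isLittleO_sum_range_of_tendsto_zero (tendsto_const_nhds.if hlim))).congr_left fun n => ?_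
  rw [← sum_add_distrib]
  exact sum_congr rfl fun i _ => by split_ifs <;> simp

theorem tendsto_natSqrt_atTop : Tendsto Nat.sqrt atTop atTop :=
  tendsto_atTop_atTop.2 fun b => ⟨b * b, fun _ hn => Nat.le_sqrt.2 hn⟩

theorem isLittleO_comp_natSqrt {g : ℕ → ℝ} (h : g =o[atTop] fun s => (s : ℝ) ^ 2) :
    (fun n : ℕ => g n.sqrt) =o[atTop] fun n => (n : ℝ) := by
  refine (h.comp_tendsto tendsto_natSqrt_atTop).trans_isBigO (.of_bound 1 (.of_forall fun n => ?_))
  simpa using (Nat.cast_le (α := ℝ)).2 (Nat.sqrt_le' n)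

theorem isLittleO_natSqrt_add_one :
    (fun n : ℕ => (n.sqrt : ℝ) + 1) =o[atTop] fun n => (n : ℝ) := by
  refine .add (isLittleO_comp_natSqrt ?_) ?_
  · have := (isLittleO_pow_pow_atTop_of_lt (𝕜 := ℝ) one_lt_two).comp_tendsto
      tendsto_natCast_atTop_atTop
    simpa [Function.comp_def] using this
  · exact (isLittleO_one_left_iff ℝ).2 (tendsto_norm_atTop_atTop.comp tendsto_natCast_atTop_atTop)

theorem count_isSquare_le (n : ℕ) : Nat.count IsSquare n ≤ n.sqrt + 1 := by
  rw [Nat.count_eq_card_filter_range]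
  calc #{i ∈ range n | IsSquare i} ≤ #((range (n.sqrt + 1)).image fun r => r * r) := by
        refine card_le_card fun i hi => ?_
        obtain ⟨hin, r, rfl⟩ := mem_filter.1 hi
        exact mem_image.2
          ⟨r, mem_range.2 (Nat.lt_succ_of_le (Nat.le_sqrt.2 (mem_range.1 hin).le)), rfl⟩
    _ ≤ n.sqrt + 1 := card_image_le.trans (card_range _).le

theorem isLittleO_count_isSquare :
    (fun n => (Nat.count IsSquare n : ℝ)) =o[atTop] fun n => (n : ℝ) :=
  (IsBigO.of_bound 1 (.of_forall fun n => by
    simpa [abs_of_nonneg (by positivity : (0:ℝ) ≤ n.sqrt + 1)] using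
      (Nat.cast_le (α := ℝ)).2 (count_isSquare_le n))).trans_isLittleO isLittleO_natSqrt_add_one

theorem infinite_setOf_isSquare : {k : ℕ | IsSquare k}.Infinite :=
  (Set.infinite_range_of_injective fun _ _ h => Nat.mul_self_inj.1 h).mono <| by
    rintro _ ⟨r, rfl⟩
    exact ⟨r, rfl⟩

theorem abs_sum_sub_integral_le {f : ℝ → ℝ} (hf : ContinuousOn f (Set.Icc 0 1)) {N : ℕ}
    (hN : 0 < N) {ε : ℝ}
    (hε : ∀ s ∈ Set.Icc (0:ℝ) 1, ∀ t ∈ Set.Icc (0:ℝ) 1, |s - t| ≤ 1 / N → |f s - f t| ≤ ε) :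
    |∑ j ∈ range N, (f (j / N) - ∫ t in (0:ℝ)..1, f t)| ≤ ε * N := by
  have hN' : (0 : ℝ) < N := Nat.cast_pos.2 hN
  set a : ℕ → ℝ := fun j => j / N
  have hlen : ∀ j, a (j + 1) - a j = 1 / N := fun j => by simp only [a]; push_cast; ring
  have hle : ∀ j, a j ≤ a (j + 1) := fun j => by linarith [hlen j, one_div_pos.2 hN']
  have hsub : ∀ j < N, Set.Icc (a j) (a (j + 1)) ⊆ Set.Icc 0 1 := fun j hj =>
    Set.Icc_subset_Icc (by positivity) <| (div_le_one hN').2 (by exact_mod_cast hj)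
  have hint : ∀ j < N, IntervalIntegrable f MeasureTheory.volume (a j) (a (j + 1)) := fun j hj =>
    (hf.mono (Set.uIcc_of_le (hle j) ▸ hsub j hj)).intervalIntegrable
  have hsplit : ∑ j ∈ range N, ∫ t in a j..a (j + 1), f t = ∫ t in (0:ℝ)..1, f t := by
    rw [intervalIntegral.sum_integral_adjacent_intervals hint]
    simp [a, hN'.ne']
  have hterm : ∀ j < N, |f (a j) - N * ∫ t in a j..a (j + 1), f t| ≤ ε := by
    intro j hj
    have hconst : f (a j) - N * ∫ t in a j..a (j + 1), f t
        = N * ∫ t in a j..a (j + 1), (f (a j) - f t) := by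
      rw [intervalIntegral.integral_sub intervalIntegrable_const (hint j hj),
        intervalIntegral.integral_const, smul_eq_mul, hlen]
      field_simp
    have hbound : ‖∫ t in a j..a (j + 1), (f (a j) - f t)‖ ≤ ε * |a (j + 1) - a j| := by
      refine intervalIntegral.norm_integral_le_of_norm_le_const fun t ht => ?_
      rw [Set.uIoc_of_le (hle j)] at ht
      have hjt : |a j - t| ≤ 1 / N := by
        rw [abs_sub_comm, abs_of_nonneg (by linarith [ht.1]), ← hlen j]; linarith [ht.2]
      exact hε _ (hsub j hj ⟨le_rfl, hle j⟩) _ (hsub j hj (Set.Ioc_subset_Icc_self ht)) hjt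
    rw [hconst, abs_mul, abs_of_pos hN', ← Real.norm_eq_abs]
    calc (N : ℝ) * ‖∫ t in a j..a (j + 1), (f (a j) - f t)‖ ≤ N * (ε * (1 / N)) := by
          rw [hlen, abs_of_pos (one_div_pos.2 hN')] at hbound; gcongr
      _ = ε := by field_simp
  calc |∑ j ∈ range N, (f (j / N) - ∫ t in (0:ℝ)..1, f t)|
      = |∑ j ∈ range N, (f (a j) - N * ∫ t in a j..a (j + 1), f t)| := by
        rw [sum_sub_distrib, sum_sub_distrib, ← mul_sum, hsplit, sum_const, card_range,
          nsmul_eq_mul]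
    _ ≤ ∑ _j ∈ range N, ε :=
        (abs_sum_le_sum_abs _ _).trans (sum_le_sum fun j hj => hterm j (mem_range.1 hj))
    _ = ε * N := by rw [sum_const, card_range, nsmul_eq_mul, mul_comm]

theorem isLittleO_sum_sub_integral {f : ℝ → ℝ} (hf : ContinuousOn f (Set.Icc 0 1)) :
    (fun N : ℕ => ∑ j ∈ range N, (f (j / N) - ∫ t in (0:ℝ)..1, f t)) =o[atTop]
      fun N => (N : ℝ) := by
  refine isLittleO_iff.2 fun ε hε => ?_
  obtain ⟨δ, hδ, hfδ⟩ := Metric.uniformContinuousOn_iff_le.1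
    (isCompact_Icc.uniformContinuousOn_of_continuous hf) ε hε
  obtain ⟨N₀, hN₀⟩ := exists_nat_one_div_lt hδ
  filter_upwards [eventually_gt_atTop N₀] with N hN
  rw [Real.norm_natCast]
  refine abs_sum_sub_integral_le hf (by omega) fun s hs t ht hst => hfδ s hs t ht ?_
  calc dist s t = |s - t| := Real.dist_eq s t
    _ ≤ 1 / N := hst
    _ ≤ 1 / (N₀ + 1) := by gcongr; exact_mod_cast hN
    _ ≤ δ := hN₀.le

theorem sum_range_mul_self {M : Type*} [AddCommMonoid M] (g : ℕ → M) (s : ℕ) :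
    ∑ i ∈ range (s * s), g i = ∑ t ∈ range s, ∑ j ∈ range (2 * t + 1), g (t * t + j) := by
  induction s with
  | zero => simp
  | succ s ih => rw [show (s + 1) * (s + 1) = s * s + (2 * s + 1) by ring, sum_range_add, ih,
    sum_range_succ _ s]

theorem isLittleO_sum_range_of_shells {g : ℕ → ℝ} {C : ℝ} (hg : ∀ i, |g i| ≤ C)
    (hshell : (fun s => ∑ j ∈ range (2 * s + 1), g (s * s + j)) =o[atTop]
      fun s => (2 * s + 1 : ℝ)) :
    (fun n => ∑ i ∈ range n, g i) =o[atTop] fun n => (n : ℝ) := by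
  have hodd : ∀ s : ℕ, ∑ t ∈ range s, (2 * t + 1 : ℝ) = (s : ℝ) ^ 2 := fun s => by
    induction s with
    | zero => simp
    | succ s ih => rw [sum_range_succ, ih]; push_cast; ring
  have hsquares : (fun s => ∑ i ∈ range (s * s), g i) =o[atTop] fun s => (s : ℝ) ^ 2 := by
    have := hshell.sum_range (fun s => by positivity) <| by
      simpa only [hodd, Function.comp_def] using
        (tendsto_pow_atTop two_ne_zero).comp tendsto_natCast_atTop_atTop
    simpa only [sum_range_mul_self, hodd] using this
  have hrest : (fun n => ∑ j ∈ range (n - n.sqrt * n.sqrt), g (n.sqrt * n.sqrt + j)) =O[atTop]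
      fun n : ℕ => (n.sqrt : ℝ) + 1 := by
    refine .of_bound (2 * C) (.of_forall fun n => ?_)
    have hlen : n - n.sqrt * n.sqrt ≤ 2 * n.sqrt + 1 := by have := Nat.sqrt_le_add n; omega
    calc ‖∑ j ∈ range (n - n.sqrt * n.sqrt), g (n.sqrt * n.sqrt + j)‖
        ≤ ∑ _j ∈ range (n - n.sqrt * n.sqrt), C := norm_sum_le_of_le _ fun j _ => hg _
      _ = (n - n.sqrt * n.sqrt : ℕ) * C := by rw [sum_const, card_range, nsmul_eq_mul]
      _ ≤ (2 * n.sqrt + 1 : ℕ) * C := by gcongr; exact (abs_nonneg _).trans (hg 0)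
      _ ≤ 2 * C * ‖(n.sqrt : ℝ) + 1‖ := by
        rw [Real.norm_of_nonneg (by positivity)]; push_cast
        nlinarith [(abs_nonneg _).trans (hg 0)]
  refine ((isLittleO_comp_natSqrt hsquares).add
    (hrest.trans_isLittleO isLittleO_natSqrt_add_one)).congr_left fun n => ?_
  rw [← sum_range_add, Nat.add_sub_cancel' (Nat.sqrt_le n)]

noncomputable def shellSeq (n : ℕ) : ℝ := ((n - n.sqrt * n.sqrt : ℕ) : ℝ) / (2 * n.sqrt + 1)

theorem shellSeq_mem_Icc (n : ℕ) : shellSeq n ∈ Set.Icc 0 1 := by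
  refine ⟨by unfold shellSeq; positivity, (div_le_one (by positivity)).2 ?_⟩
  have hlen : n - n.sqrt * n.sqrt ≤ 2 * n.sqrt + 1 := by have := Nat.sqrt_le_add n; omega
  exact_mod_cast hlen

theorem shellSeq_mul_self_add {s j : ℕ} (hj : j < 2 * s + 1) :
    shellSeq (s * s + j) = j / (2 * s + 1 : ℕ) := by
  rw [shellSeq, Nat.sqrt_add_eq s (by omega), Nat.add_sub_cancel_left]
  push_cast; rfl

theorem isUniformlyDistributed_shellSeq : IsUniformlyDistributed shellSeq := by
  intro f hf
  obtain ⟨M, hM⟩ := isCompact_Icc.exists_bound_of_continuousOn hf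
  rw [tendsto_sum_div_iff_isLittleO]
  refine isLittleO_sum_range_of_shells (C := M + |∫ t in (0:ℝ)..1, f t|)
    (fun i => (abs_sub _ _).trans (add_le_add_left (hM _ (shellSeq_mem_Icc i)) _)) ?_
  have := (isLittleO_sum_sub_integral hf).comp_tendsto
    (tendsto_atTop_mono (fun s => by omega : ∀ s : ℕ, s ≤ 2 * s + 1) tendsto_id)
  refine (this.congr_left fun s => sum_congr rfl fun j hj => ?_).congr_right fun s => by simp
  rw [shellSeq_mul_self_add (mem_range.1 hj)]

theorem IsUniformlyDistributed.of_tendsto_sub {w y : ℕ → ℝ} (hw : IsUniformlyDistributed w)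
    (hw01 : ∀ i, w i ∈ Set.Icc 0 1) (hy01 : ∀ i, y i ∈ Set.Icc 0 1) {p : ℕ → Prop}
    [DecidablePred p] (hp : (fun n => (Nat.count p n : ℝ)) =o[atTop] fun n => (n : ℝ))
    (hyw : Tendsto (fun i => y i - w i) (atTop ⊓ 𝓟 {i | ¬ p i}) (𝓝 0)) :
    IsUniformlyDistributed y := by
  intro f hf
  obtain ⟨M, hM⟩ := isCompact_Icc.exists_bound_of_continuousOn hf
  have hnear : Tendsto (fun i => f (y i) - f (w i)) (atTop ⊓ 𝓟 {i | ¬ p i}) (𝓝 0) := by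
    rw [Metric.tendsto_nhds] at hyw ⊢
    intro ε hε
    obtain ⟨δ, hδ, hfδ⟩ := Metric.uniformContinuousOn_iff.1
      (isCompact_Icc.uniformContinuousOn_of_continuous hf) ε hε
    filter_upwards [hyw δ hδ] with i hi
    rw [dist_zero_right, ← dist_eq_norm] at hi ⊢
    exact hfδ _ (hy01 i) _ (hw01 i) hi
  have hbound : ∀ i, |f (y i) - f (w i)| ≤ M + M :=
    fun i => (abs_sub _ _).trans (add_le_add (hM _ (hy01 i)) (hM _ (hw01 i)))
  rw [tendsto_sum_div_iff_isLittleO]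
  refine ((isLittleO_sum_range_of_tendsto_of_count hbound hp hnear).add
    (tendsto_sum_div_iff_isLittleO.1 (hw f hf))).congr_left fun n => ?_
  rw [← sum_add_distrib]
  exact sum_congr rfl fun i _ => by ring

theorem exists_mem_of_isOpen {x : ℕ → ℝ}
    (hdense : ∀ a b : ℝ, 0 ≤ a → a < b → b ≤ 1 → ∃ n, x n ∈ Set.Ioo a b) {U : Set ℝ}
    (hU : IsOpen U) (hne : (U ∩ Set.Ioo 0 1).Nonempty) : ∃ n, x n ∈ U := by
  obtain ⟨c, hc⟩ := hne
  obtain ⟨δ, hδ, hball⟩ := Metric.isOpen_iff.1 (hU.inter isOpen_Ioo) c hc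
  rw [Real.ball_eq_Ioo] at hball
  obtain ⟨h0, h1⟩ := (Set.Ioo_subset_Ioo_iff (by linarith)).1 (hball.trans Set.inter_subset_right)
  obtain ⟨n, hn⟩ := hdense _ _ h0 (by linarith) h1
  exact ⟨n, (hball hn).1⟩

theorem infinite_setOf_dist_lt {x : ℕ → ℝ}
    (hdense : ∀ a b : ℝ, 0 ≤ a → a < b → b ≤ 1 → ∃ n, x n ∈ Set.Ioo a b) {c r : ℝ}
    (hc : c ∈ Set.Icc 0 1) (hr : 0 < r) : {n | dist (x n) c < r}.Infinite := by
  intro hfin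
  have hne : (Metric.ball c r ∩ Set.Ioo 0 1).Nonempty := by
    rw [← closure_Ioo zero_ne_one] at hc
    exact mem_closure_iff.1 hc _ Metric.isOpen_ball (Metric.mem_ball_self hr)
  obtain ⟨z, hz, hzF⟩ := ((hfin.image x).countable.dense_compl ℝ).inter_open_nonempty _
    (Metric.isOpen_ball.inter isOpen_Ioo) hne
  obtain ⟨n, hn, hnF⟩ := exists_mem_of_isOpen hdense
    (Metric.isOpen_ball.inter (hfin.image x).isClosed.isOpen_compl) ⟨z, ⟨hz.1, hzF⟩, hz.2⟩
  exact hnF ⟨n, hn, rfl⟩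

section GreedyEnumeration

variable (p : ℕ → Prop) [DecidablePred p] (c : ℕ → Finset ℕ → ℕ)

def greedyNext (k : ℕ) (S : Finset ℕ) : ℕ :=
  if p k then Nat.find (Infinite.exists_notMem_finset S) else c k S

def greedyTaken : ℕ → Finset ℕ
  | 0 => ∅
  | k + 1 => insert (greedyNext p c k (greedyTaken k)) (greedyTaken k)

def greedySeq (k : ℕ) : ℕ := greedyNext p c k (greedyTaken p c k)

theorem greedyTaken_eq_image (k : ℕ) : greedyTaken p c k = (range k).image (greedySeq p c) := by
  induction k with
  | zero => rfl
  | succ k ih => rw [greedyTaken, range_add_one, image_insert, ← ih]; rfl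

variable {p c}

theorem greedySeq_injective (hc : ∀ k S, c k S ∉ S) : (greedySeq p c).Injective := by
  refine Function.Injective.of_lt_imp_ne fun j k hjk hjk' => ?_
  have hnew : greedySeq p c k ∉ greedyTaken p c k := by
    unfold greedySeq greedyNext
    split_ifs
    · exact Nat.find_spec (Infinite.exists_notMem_finset _)
    · exact hc _ _
  rw [greedyTaken_eq_image, ← hjk'] at hnew
  exact hnew (mem_image_of_mem _ (mem_range.2 hjk))

/-- Every `m` is eventually taken: otherwise the infinitely many steps `k` with `p k` would all take
distinct values below `m`. -/
theorem greedySeq_surjective (hc : ∀ k S, c k S ∉ S) (hp : {k | p k}.Infinite) :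
    (greedySeq p c).Surjective := by
  intro m
  by_contra! hm
  have hle : ∀ k, p k → greedySeq p c k ≤ m := fun k hk => by
    rw [greedySeq, greedyNext, if_pos hk]
    refine Nat.find_min' _ fun hmem => ?_
    rw [greedyTaken_eq_image] at hmem
    obtain ⟨j, -, hj⟩ := mem_image.1 hmem
    exact hm j hj
  exact hp (((Set.finite_Iic m).subset (Set.image_subset_iff.2 hle)).of_finite_image
    (greedySeq_injective hc).injOn)

end GreedyEnumeration

theorem exists_equiv_mem_of_infinite {A : ℕ → Set ℕ} (hA : ∀ k, (A k).Infinite) {p : ℕ → Prop}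
    (hp : {k | p k}.Infinite) : ∃ e : ℕ ≃ ℕ, ∀ k, ¬ p k → e k ∈ A k := by
  classical
  choose c hcA hcS using fun k (S : Finset ℕ) => (hA k).exists_notMem_finset S
  refine ⟨.ofBijective _ ⟨greedySeq_injective hcS, greedySeq_surjective hcS hp⟩, fun k hk => ?_⟩
  change greedyNext p c k _ ∈ A k
  rw [greedyNext, if_neg hk]
  exact hcA _ _

/-- **von Neumann's theorem.** If `{x_n}` is a dense sequence of points in `[0,1]` (every
nonempty open subinterval contains some `x_n`), then there is a rearrangement of these points
(a reindexing by a bijection of `ℕ`) which is uniformly distributed. -/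
theorem vonNeumann (x : ℕ → ℝ) (hmem : ∀ n, x n ∈ Set.Icc (0:ℝ) 1)
    (hdense : ∀ a b : ℝ, 0 ≤ a → a < b → b ≤ 1 → ∃ n, x n ∈ Set.Ioo a b) :
    ∃ e : ℕ ≃ ℕ, ∀ f : ℝ → ℝ, ContinuousOn f (Set.Icc 0 1) →
      Tendsto (fun n => (∑ i ∈ Finset.range n, f (x (e i))) / (n : ℝ))
        atTop (nhds (∫ t in (0:ℝ)..1, f t)) := by
  obtain ⟨e, he⟩ := exists_equiv_mem_of_infinite
    (fun k => infinite_setOf_dist_lt hdense (shellSeq_mem_Icc k) Nat.one_div_pos_of_nat)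
    infinite_setOf_isSquare
  refine ⟨e, isUniformlyDistributed_shellSeq.of_tendsto_sub shellSeq_mem_Icc (fun i => hmem (e i))
    isLittleO_count_isSquare ?_⟩
  refine squeeze_zero_norm' ?_ (tendsto_one_div_add_atTop_nhds_zero_nat.mono_left inf_le_left)
  exact eventually_inf_principal.2 (.of_forall fun k hk => (he k hk).le)
end

section
/- Let s ≥ 1 and let real numbers α^1, …, α^s satisfy α^1 = 1/2 and (1/2^t − 1/4^s)/(1/2^{t−1}) ≤ α^t ≤ (1/2^t)/(1/2^{t−1} − 2/4^s) for 2 ≤ t ≤ s. Then for every 1 ≤ t ≤ s the product L(t) = Π_{j=1}^{t} α^j satisfies (1/2^t)(1 − 2^t/4^s)^{t−1} ≤ L(t) ≤ (1/2^t)(1 − 2^t/4^s)^{−(t−1)}. -/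
/-!
Write `c t = 1 - 2 ^ t / 4 ^ s`, positive for `t < 2 s` and decreasing in `t`. The hypothesis on
`αʲ` simplifies to `c j / 2 ≤ αʲ ≤ 1 / (2 c j)`, so for `2 ≤ j ≤ t` every factor lies in
`[c t / 2, 1 / (2 c t)]`; with `α¹ = 1/2` the product of the `t` factors lies between
`(1/2) (c t / 2)^(t-1)` and `(1/2) (2 c t)^(-(t-1))`.
-/

open Finset

lemma one_sub_two_pow_div_four_pow_pos {s t : ℕ} (h : t < 2 * s) :
    0 < 1 - (2 : ℝ) ^ t / 4 ^ s := by
  have : (2 : ℝ) ^ t < 4 ^ s := by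
    rw [show (4 : ℝ) = 2 ^ 2 by norm_num, ← pow_mul]
    exact pow_lt_pow_right₀ (by norm_num) h
  rwa [sub_pos, div_lt_one (by positivity)]

lemma sub_one_div_div_one_div_two_pow {y : ℝ} (hy : y ≠ 0) (n : ℕ) :
    (1 / 2 ^ (n + 1) - 1 / y) / (1 / 2 ^ n) = (1 - 2 ^ (n + 1) / y) / 2 := by
  field_simp
  ring

lemma one_div_two_pow_div_sub {y : ℝ} (hy : y ≠ 0) (n : ℕ) :
    (1 / 2 ^ (n + 1)) / (1 / 2 ^ n - 2 / y) = (2 * (1 - 2 ^ (n + 1) / y))⁻¹ := by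
  rw [show (1 : ℝ) / 2 ^ n - 2 / y = (1 - 2 ^ (n + 1) / y) / 2 ^ n by field_simp; ring,
    div_div_eq_mul_div, pow_succ]
  field_simp

lemma factor_bounds_of_le {s t j : ℕ} {a : ℝ} (hj : 1 ≤ j) (hjt : j ≤ t) (ht : t < 2 * s)
    (h : ((1 : ℝ) / 2 ^ j - 1 / 4 ^ s) / (1 / 2 ^ (j - 1)) ≤ a ∧
      a ≤ (1 / 2 ^ j) / ((1 : ℝ) / 2 ^ (j - 1) - 2 / 4 ^ s)) :
    (1 - (2 : ℝ) ^ t / 4 ^ s) / 2 ≤ a ∧ a ≤ (2 * (1 - (2 : ℝ) ^ t / 4 ^ s))⁻¹ := by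
  obtain ⟨n, rfl⟩ : ∃ n, j = n + 1 := ⟨j - 1, by omega⟩
  rw [Nat.add_sub_cancel, sub_one_div_div_one_div_two_pow (by positivity),
    one_div_two_pow_div_sub (by positivity)] at h
  have hmono : 1 - (2 : ℝ) ^ t / 4 ^ s ≤ 1 - 2 ^ (n + 1) / 4 ^ s := by
    gcongr; norm_num
  have hpos := one_sub_two_pow_div_four_pow_pos (s := s) ht
  exact ⟨by linarith [h.1], h.2.trans (by gcongr)⟩

theorem product_bounds_general (s : ℕ) (α : ℕ → ℝ) (hα1 : α 1 = 1 / 2)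
    (hα : ∀ t : ℕ, 2 ≤ t → t ≤ s →
      ((1 : ℝ) / 2 ^ t - 1 / 4 ^ s) / (1 / 2 ^ (t - 1)) ≤ α t ∧
        α t ≤ (1 / 2 ^ t) / ((1 : ℝ) / 2 ^ (t - 1) - 2 / 4 ^ s)) :
    ∀ t : ℕ, 1 ≤ t → t ≤ s →
      (1 / 2 ^ t) * ((1 : ℝ) - 2 ^ t / 4 ^ s) ^ (t - 1) ≤ (∏ j ∈ Finset.Icc 1 t, α j) ∧
        (∏ j ∈ Finset.Icc 1 t, α j) ≤
          (1 / 2 ^ t) * ((1 : ℝ) - 2 ^ t / 4 ^ s) ^ (-((t : ℤ) - 1)) := by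
  rintro t ht hts
  obtain ⟨n, rfl⟩ : ∃ n, t = n + 1 := ⟨t - 1, by omega⟩
  set c := 1 - (2 : ℝ) ^ (n + 1) / 4 ^ s
  have hc : 0 < c := one_sub_two_pow_div_four_pow_pos (by omega)
  have hfactor (j) (hj : j ∈ Icc 2 (n + 1)) : c / 2 ≤ α j ∧ α j ≤ (2 * c)⁻¹ := by
    rw [mem_Icc] at hj
    exact factor_bounds_of_le (by omega) hj.2 (by omega) (hα j hj.1 (by omega))
  have hcard : #(Icc 2 (n + 1)) = n := by simp
  rw [← insert_Icc_add_one_left_eq_Icc ht, prod_insert (by simp), hα1, Nat.add_sub_cancel]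
  constructor
  · calc 1 / 2 ^ (n + 1) * c ^ n
        _ = 1 / 2 * (c / 2) ^ n := by rw [div_pow]; ring
        _ ≤ 1 / 2 * ∏ j ∈ Icc 2 (n + 1), α j := by
          gcongr
          have := prod_le_prod (fun _ _ ↦ by positivity) fun j hj ↦ (hfactor j hj).1
          rwa [prod_const, hcard] at this
  · calc 1 / 2 * ∏ j ∈ Icc 2 (n + 1), α j
        _ ≤ 1 / 2 * (2 * c)⁻¹ ^ n := by
          gcongr
          have := prod_le_prod (fun j hj ↦ (div_pos hc two_pos).le.trans (hfactor j hj).1)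
            fun j hj ↦ (hfactor j hj).2
          rwa [prod_const, hcard] at this
        _ = 1 / 2 ^ (n + 1) * c ^ (-((↑(n + 1) : ℤ) - 1)) := by
          rw [Nat.cast_succ, add_sub_cancel_right, zpow_neg, zpow_natCast, mul_inv, mul_pow,
            inv_pow, inv_pow, pow_succ]
          ring

/-- Estimate (bounds on `L_s(t)`): if `α¹ = 1/2` and
`(1/2^t - 1/4^s)/(1/2^(t-1)) ≤ αᵗ ≤ (1/2^t)/(1/2^(t-1) - 2/4^s)` for `2 ≤ t ≤ s`, then
for every `1 ≤ t ≤ s` the product `L(t) = ∏_{j=1}^t αʲ` satisfies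
`(1/2^t)(1 - 2^t/4^s)^(t-1) ≤ L(t) ≤ (1/2^t)(1 - 2^t/4^s)^(-(t-1))`. -/
theorem product_bounds (s : ℕ) (hs : 1 ≤ s) (α : ℕ → ℝ) (hα1 : α 1 = 1 / 2)
    (hα : ∀ t : ℕ, 2 ≤ t → t ≤ s →
      ((1 : ℝ) / 2 ^ t - 1 / 4 ^ s) / (1 / 2 ^ (t - 1)) ≤ α t ∧
        α t ≤ (1 / 2 ^ t) / ((1 : ℝ) / 2 ^ (t - 1) - 2 / 4 ^ s)) :
    ∀ t : ℕ, 1 ≤ t → t ≤ s →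
      (1 / 2 ^ t) * ((1 : ℝ) - 2 ^ t / 4 ^ s) ^ (t - 1) ≤ (∏ j ∈ Finset.Icc 1 t, α j) ∧
        (∏ j ∈ Finset.Icc 1 t, α j) ≤
          (1 / 2 ^ t) * ((1 : ℝ) - 2 ^ t / 4 ^ s) ^ (-((t : ℤ) - 1)) :=
  product_bounds_general s α hα1 hα
end
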